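/- Let α = log_4(8/3) and let β : ℕ → ℝ be given by β_d = (1/2)·log_4(3/2) for d ≥ 3 and β_d = 0 for d ≤ 2. For every integer D ≥ 4 and every finite list d = (d_1, …, d_f) of integers with 0 ≤ f ≤ D and d_i ≥ 3 for all i, it holds that 4^{−Δ2(D,d)} ≤ (3/8)^{1/2} · (3/2)^{(1−f)/2}. -/

import Mathlib

/-- The simple-analysis parameter function `β`:
`β_d = (1/2)·log_4(3/2)` for `d ≥ 3` and `β_d = 0` for `d ≤ 2`. -/
noncomputable def simpleBeta : ℕ → ℝ := fun d =>
  if 3 ≤ d then (1 / 2) * Real.logb 4 (3 / 2) else 0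

/-- `Δ1(D, d) = 1 − f·α/D + Σ_{i=1}^f (β_{d_i} − β_{d_i−1})` where `f` is the
length of the list `d`. -/
noncomputable def Delta1 (α : ℝ) (β : ℕ → ℝ) (D : ℕ) (d : List ℕ) : ℝ :=
  1 - (d.length : ℝ) * α / D + (d.map (fun x => β x - β (x - 1))).sum

/-- `Δ2(D, d) = α − 2α/D + Σ_{i=1}^f β_{d_i} − β_{d'}` where
`d' = D + Σ_{i=1}^f (d_i − 2)`. -/
noncomputable def Delta2 (α : ℝ) (β : ℕ → ℝ) (D : ℕ) (d : List ℕ) : ℝ :=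
  α - 2 * α / D + (d.map β).sum - β (D + (d.map (fun x => x - 2)).sum)

/-!
Since every degree involved, including `d' ≥ D`, is at least `3`, all the `β`-terms equal
`b = (1/2)·log_4(3/2)`, so `Δ2 = α − 2α/D + (f − 1)·b`. Exponentiating base `4` splits
`4^{−Δ2}` as `(8/3)^{2/D − 1} · (3/2)^{(1−f)/2}`, and `2/D − 1 ≤ −1/2` for `D ≥ 4`.
-/

open Real

theorem simpleBeta_of_three_le {d : ℕ} (hd : 3 ≤ d) : simpleBeta d = logb 4 (3 / 2) / 2 := by
  rw [simpleBeta, if_pos hd]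
  ring

theorem Delta2_of_eq_const {α b : ℝ} {β : ℕ → ℝ} (hβ : ∀ x, 3 ≤ x → β x = b)
    {D : ℕ} (hD : 3 ≤ D) {d : List ℕ} (hd : ∀ x ∈ d, 3 ≤ x) :
    Delta2 α β D d = α - 2 * α / D + ((d.length : ℝ) - 1) * b := by
  have hsum : (d.map β).sum = d.length * b := by
    rw [List.map_congr_left (fun x hx => hβ x (hd x hx)), List.map_const', List.sum_replicate,
      nsmul_eq_mul]
  rw [Delta2, hsum, hβ _ (hD.trans (Nat.le_add_right _ _))]
  ring

theorem four_rpow_neg_Delta2_simpleBeta {D : ℕ} (hD : 3 ≤ D) {d : List ℕ}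
    (hd : ∀ x ∈ d, 3 ≤ x) :
    (4 : ℝ) ^ (-Delta2 (logb 4 (8 / 3)) simpleBeta D d)
      = (8 / 3 : ℝ) ^ ((2 : ℝ) / D - 1) * (3 / 2 : ℝ) ^ (((1 : ℝ) - d.length) / 2) := by
  have h4 : (0 : ℝ) < 4 := by norm_num
  have hexp : -Delta2 (logb 4 (8 / 3)) simpleBeta D d
      = logb 4 (8 / 3) * ((2 : ℝ) / D - 1) + logb 4 (3 / 2) * (((1 : ℝ) - d.length) / 2) := by
    rw [Delta2_of_eq_const (fun _ => simpleBeta_of_three_le) hD hd]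
    ring
  rw [hexp, rpow_add h4, rpow_mul h4.le, rpow_mul h4.le,
    rpow_logb h4 (by norm_num) (by norm_num), rpow_logb h4 (by norm_num) (by norm_num)]

theorem rpow_two_div_sub_one_le_inv_rpow_half {a : ℝ} (ha : 1 ≤ a) {D : ℕ} (hD : 4 ≤ D) :
    a ^ ((2 : ℝ) / D - 1) ≤ a⁻¹ ^ ((1 : ℝ) / 2) := by
  have hD' : (4 : ℝ) ≤ D := by exact_mod_cast hD
  have hexp : (2 : ℝ) / D - 1 ≤ -(1 / 2) := by
    have : (2 : ℝ) / D ≤ 1 / 2 := by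
      rw [div_le_div_iff₀ (by linarith) (by norm_num)]
      linarith
    linarith
  rw [inv_rpow (by linarith), ← rpow_neg (by linarith)]
  exact rpow_le_rpow_of_exponent_le ha hexp

theorem stmt16_general (D : ℕ) (hD : 4 ≤ D) (d : List ℕ)
    (hd : ∀ x ∈ d, 3 ≤ x) :
    (4 : ℝ) ^ (-(Delta2 (Real.logb 4 (8 / 3)) simpleBeta D d))
      ≤ (3 / 8 : ℝ) ^ ((1 : ℝ) / 2)
        * (3 / 2 : ℝ) ^ (((1 : ℝ) - (d.length : ℝ)) / 2) := by
  rw [four_rpow_neg_Delta2_simpleBeta (by omega) hd]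
  gcongr
  simpa using rpow_two_div_sub_one_le_inv_rpow_half (a := 8 / 3) (by norm_num) hD

/-- With `α = log_4(8/3)` and the simple-analysis `β`, for every
`D ≥ 4` and every list `d` with `f ≤ D` and `d_i ≥ 3` for all `i`,
`4^{−Δ2(D,d)} ≤ (3/8)^{1/2} · (3/2)^{(1−f)/2}`. -/
theorem stmt16 (D : ℕ) (hD : 4 ≤ D) (d : List ℕ)
    (hf : d.length ≤ D) (hd : ∀ x ∈ d, 3 ≤ x) :
    (4 : ℝ) ^ (-(Delta2 (Real.logb 4 (8 / 3)) simpleBeta D d))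
      ≤ (3 / 8 : ℝ) ^ ((1 : ℝ) / 2)
        * (3 / 2 : ℝ) ^ (((1 : ℝ) - (d.length : ℝ)) / 2) :=
  stmt16_general D hD d hd
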